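/- arXiv:2103.15276 — 2 statements merged into one kernel-verified Lean document; each statement's English description precedes it below -/
import Mathlib

section
/- (Quantitative form of Theorem 3.1.) Under the Hilbert propagator setup and the Hilbert solution setup, assume S := sup_{t≥0} ‖U(t)‖ < ∞ and M := sup_{t≥0} ‖U(t)‖·∫₀ᵗ ‖V(ξ)‖·α(ξ) dξ satisfies 0 < M < ∞. Let ε > 0 satisfy ε^{p−1}·M < 1/4, and assume ‖u₀‖·S < ε/4, ‖u₀‖ < ε, and β(t) ≤ ε·α(t)/(4M) for all t ≥ 0. Then ‖u(t)‖ ≤ ε for all t ∈ [0,T). -/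
open Set MeasureTheory
open scoped InnerProductSpace ENNReal

/-!
Conjugating by the propagator removes the linear part: the derivative of `V s (u s)` is
`V s (w s + G s + f s)`. The dissipative term `w` then makes a nonpositive contribution to the
derivative of `‖V s (u s)‖`, so `‖V s (u s)‖` grows at rate at most `‖V s‖ (‖G s‖ + ‖f s‖)`. While
`‖u‖ < ε`, this rate is at most `(ε ^ p + ε / (4 M)) ‖V s‖ α s`. Applying `U c` gives
`‖u c‖ ≤ S ‖u₀‖ + (ε ^ p + ε / (4 M)) M < ε / 4 + ε / 4 + ε / 4`, and a first-exit-time argument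
shows that `‖u‖` never reaches `ε`.
-/

theorem forall_lt_of_forall_Ico_lt_imp_lt {α β : Type*} [ConditionallyCompleteLinearOrder α]
    [TopologicalSpace α] [OrderTopology α] [LinearOrder β] [TopologicalSpace β]
    [OrderClosedTopology β] {g : α → β} {a b : α} {ε : β} (hg : ContinuousOn g (Icc a b))
    (hstep : ∀ c ∈ Icc a b, (∀ s ∈ Ico a c, g s < ε) → g c < ε) :
    ∀ s ∈ Icc a b, g s < ε := by
  by_contra! ⟨s, hs, hεs⟩
  set X := Icc a b ∩ g ⁻¹' Ici ε
  -- `sInf X` is the first time at which `g` reaches `ε`.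
  have hXbdd : BddBelow X := ⟨a, fun x hx => hx.1.1⟩
  have hfirst : sInf X ∈ X :=
    (hg.preimage_isClosed_of_isClosed isClosed_Icc isClosed_Ici).csInf_mem ⟨s, hs, hεs⟩ hXbdd
  refine not_lt.2 hfirst.2 (hstep _ hfirst.1 fun r hr => ?_)
  by_contra! hεr
  exact not_le.2 hr.2 (csInf_le hXbdd ⟨⟨hr.1, hr.2.le.trans hfirst.1.2⟩, hεr⟩)

theorem deriv_norm_le_of_re_inner_le {E : Type*} [NormedAddCommGroup E] [InnerProductSpace ℂ E]
    {g : ℝ → E} {g' : E} {x C : ℝ} (hg : HasDerivAt g g' x)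
    (hn : DifferentiableAt ℝ (fun s => ‖g s‖) x) (hC : 0 ≤ C)
    (h : (⟪g', g x⟫_ℂ).re ≤ C * ‖g x‖) : deriv (fun s => ‖g s‖) x ≤ C := by
  rcases (norm_nonneg (g x)).eq_or_lt with h0 | h0
  · have hmin : IsLocalMin (fun s => ‖g s‖) x :=
      Filter.Eventually.of_forall fun s => by simp only [← h0, norm_nonneg]
    exact hmin.deriv_eq_zero ▸ hC
  have hsq : HasDerivAt (fun s => ‖g s‖ ^ 2) (2 * (⟪g', g x⟫_ℂ).re) x := by
    have hre := Complex.reCLM.hasFDerivAt.comp_hasDerivAt x (hg.inner ℂ hg)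
    have hfun : (Complex.reCLM ∘ fun s => ⟪g s, g s⟫_ℂ) = fun s => ‖g s‖ ^ 2 := by
      ext s
      exact inner_self_eq_norm_sq (𝕜 := ℂ) (g s)
    have hval : Complex.reCLM (⟪g x, g'⟫_ℂ + ⟪g', g x⟫_ℂ) = 2 * (⟪g', g x⟫_ℂ).re := by
      rw [Complex.reCLM_apply, Complex.add_re, ← inner_conj_symm, Complex.conj_re]
      ring
    rwa [hfun, hval] at hre
  have hprod : 2 * ‖g x‖ * deriv (fun s => ‖g s‖) x = 2 * (⟪g', g x⟫_ℂ).re := by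
    simpa [mul_comm] using (hn.hasDerivAt.pow 2).unique hsq
  nlinarith

theorem hasDerivAt_apply_of_hasDerivAt_neg_comp {E F : Type*} [NormedAddCommGroup E]
    [NormedSpace ℂ E] [NormedAddCommGroup F] [NormedSpace ℂ F] {A : ℝ → E →L[ℂ] E}
    {V : ℝ → E →L[ℂ] F} {u : ℝ → E} {x : ℝ} {r : E}
    (hV : HasDerivAt V (-((V x).comp (A x))) x) (hu : HasDerivAt u (A x (u x) + r) x) :
    HasDerivAt (fun s => V s (u s)) (V x r) x := by
  have hVℝ : HasDerivAt (fun s => (V s).restrictScalars ℝ)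
      ((-((V x).comp (A x))).restrictScalars ℝ) x :=
    (ContinuousLinearMap.restrictScalarsL ℂ E F ℝ ℝ).hasFDerivAt.comp_hasDerivAt x hV
  refine (hVℝ.clm_apply hu).congr_deriv ?_
  change -V x (A x (u x)) + V x (A x (u x) + r) = V x r
  rw [map_add, neg_add_cancel_left]

theorem norm_apply_sub_le_integral {E F : Type*} [NormedAddCommGroup E] [NormedSpace ℂ E]
    [NormedAddCommGroup F] [InnerProductSpace ℂ F] {A : ℝ → E →L[ℂ] E} {V : ℝ → E →L[ℂ] F}
    {u w e : ℝ → E} {φ : ℝ → ℝ} {a b : ℝ} (hab : a ≤ b)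
    (hV : ∀ s ∈ Ioo a b, HasDerivAt V (-((V s).comp (A s))) s)
    (hu : ∀ s ∈ Ioo a b, HasDerivAt u (A s (u s) + w s + e s) s)
    (hw : ∀ s ∈ Ioo a b, (⟪V s (w s), V s (u s)⟫_ℂ).re ≤ 0)
    (hN : ∀ s ∈ Icc a b, DifferentiableAt ℝ (fun s => ‖V s (u s)‖) s)
    (hφ : IntegrableOn φ (Icc a b)) (he : ∀ s ∈ Ioo a b, ‖V s‖ * ‖e s‖ ≤ φ s) :
    ‖V b (u b)‖ - ‖V a (u a)‖ ≤ ∫ s in a..b, φ s := by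
  refine intervalIntegral.sub_le_integral_of_hasDeriv_right_of_le hab
    (fun s hs => (hN s hs).continuousAt.continuousWithinAt)
    (fun s hs => (hN s (Ioo_subset_Icc_self hs)).hasDerivAt.hasDerivWithinAt) hφ
    (fun s hs => ?_)
  have hg := hasDerivAt_apply_of_hasDerivAt_neg_comp (hV s hs) ((add_assoc _ _ (e s)) ▸ hu s hs)
  refine deriv_norm_le_of_re_inner_le hg (hN s (Ioo_subset_Icc_self hs))
    ((mul_nonneg (norm_nonneg _) (norm_nonneg _)).trans (he s hs)) ?_
  calc (⟪V s (w s + e s), V s (u s)⟫_ℂ).re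
      = (⟪V s (w s), V s (u s)⟫_ℂ).re + (⟪V s (e s), V s (u s)⟫_ℂ).re := by
        rw [map_add, inner_add_left, Complex.add_re]
    _ ≤ 0 + ‖V s (e s)‖ * ‖V s (u s)‖ :=
        add_le_add (hw s hs) ((Complex.re_le_norm _).trans (norm_inner_le_norm _ _))
    _ ≤ φ s * ‖V s (u s)‖ := by
        rw [zero_add]
        exact mul_le_mul_of_nonneg_right (((V s).le_opNorm _).trans (he s hs)) (norm_nonneg _)

theorem norm_le_opNorm_mul_norm_apply_of_comp_eq_one {𝕜 E F : Type*} [NontriviallyNormedField 𝕜]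
    [NormedAddCommGroup E] [NormedSpace 𝕜 E] [NormedAddCommGroup F] [NormedSpace 𝕜 F]
    {U : F →L[𝕜] E} {V : E →L[𝕜] F} (h : U.comp V = 1) (x : E) : ‖x‖ ≤ ‖U‖ * ‖V x‖ :=
  calc ‖x‖ = ‖U (V x)‖ := by rw [← ContinuousLinearMap.comp_apply, h, one_apply_eq_self]
    _ ≤ ‖U‖ * ‖V x‖ := U.le_opNorm _

theorem rpow_mul_lt_of_rpow_sub_one_mul_lt {ε p M a : ℝ} (hε : 0 < ε) (h : ε ^ (p - 1) * M < a) :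
    ε ^ p * M < ε * a :=
  calc ε ^ p * M = ε * (ε ^ (p - 1) * M) := by
        rw [Real.rpow_sub_one hε.ne']
        field_simp
    _ < ε * a := mul_lt_mul_of_pos_left h hε

theorem norm_lt_of_forall_Ico_norm_lt {H : Type*} [NormedAddCommGroup H] [InnerProductSpace ℂ H]
    {B U V : ℝ → H →L[ℂ] H} {u w G f : ℝ → H} {α β : ℝ → ℝ} {p S M ε c : ℝ} (hc : 0 ≤ c)
    (hV0 : V 0 = 1) (hUV : (U c).comp (V c) = 1)
    (hVd : ∀ s ∈ Icc 0 c, HasDerivAt V (-((V s).comp (B s))) s)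
    (hud : ∀ s ∈ Icc 0 c, HasDerivAt u (B s (u s) + w s + G s + f s) s)
    (hw : ∀ s ∈ Icc 0 c, (⟪V s (w s), V s (u s)⟫_ℂ).re ≤ 0)
    (hGb : ∀ s ∈ Icc 0 c, ‖G s‖ ≤ α s * ‖u s‖ ^ p) (hfb : ∀ s ∈ Icc 0 c, ‖f s‖ ≤ β s)
    (hVud : ∀ s ∈ Icc 0 c, DifferentiableAt ℝ (fun s => ‖V s (u s)‖) s)
    (hαc : Continuous α) (hα0 : ∀ s, 0 ≤ α s) (hp : 0 ≤ p)
    (hS : ‖U c‖ ≤ S) (hM : ‖U c‖ * ∫ ξ in (0:ℝ)..c, ‖V ξ‖ * α ξ ≤ M) (hM0 : 0 < M)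
    (hε : 0 < ε) (hεM : ε ^ (p - 1) * M < 1 / 4) (hu₀S : ‖u 0‖ * S < ε / 4)
    (hβε : ∀ s ∈ Icc 0 c, β s ≤ ε * α s / (4 * M)) (hprior : ∀ s ∈ Ico 0 c, ‖u s‖ < ε) :
    ‖u c‖ < ε := by
  set I := ∫ ξ in (0:ℝ)..c, ‖V ξ‖ * α ξ
  set K := ε ^ p + ε / (4 * M)
  have hK : 0 ≤ K := by positivity
  have hperturb : ∀ s ∈ Ioo 0 c, ‖V s‖ * ‖(G + f) s‖ ≤ K * (‖V s‖ * α s) := by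
    intro s hs
    have hs' := Ioo_subset_Icc_self hs
    have hus : ‖u s‖ ^ p ≤ ε ^ p :=
      Real.rpow_le_rpow (norm_nonneg _) (hprior s (Ioo_subset_Ico_self hs)).le hp
    calc ‖V s‖ * ‖(G + f) s‖ ≤ ‖V s‖ * (α s * ε ^ p + ε * α s / (4 * M)) := by
          gcongr
          exact (norm_add_le _ _).trans (add_le_add ((hGb s hs').trans (by gcongr; exact hα0 s))
            ((hfb s hs').trans (hβε s hs')))
      _ = K * (‖V s‖ * α s) := by ring
  have hint : IntegrableOn (fun s => K * (‖V s‖ * α s)) (Icc 0 c) :=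
    (continuousOn_const.mul fun s hs =>
      ((hVd s hs).continuousAt.norm.mul hαc.continuousAt).continuousWithinAt).integrableOn_Icc
  have hduhamel : ‖V c (u c)‖ - ‖u 0‖ ≤ K * I := by
    simpa [hV0, intervalIntegral.integral_const_mul] using
      norm_apply_sub_le_integral (e := G + f) hc (fun s hs => hVd s (Ioo_subset_Icc_self hs))
        (fun s hs => by simpa only [Pi.add_apply, add_assoc] using hud s (Ioo_subset_Icc_self hs))
        (fun s hs => hw s (Ioo_subset_Icc_self hs)) hVud hint hperturb
  have hKM : K * M < ε / 2 := by
    have := rpow_mul_lt_of_rpow_sub_one_mul_lt hε hεM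
    have : ε / (4 * M) * M = ε / 4 := by field_simp
    nlinarith
  calc ‖u c‖ ≤ ‖U c‖ * ‖V c (u c)‖ := norm_le_opNorm_mul_norm_apply_of_comp_eq_one hUV _
    _ ≤ ‖U c‖ * ‖u 0‖ + K * (‖U c‖ * I) := by nlinarith [norm_nonneg (U c)]
    _ ≤ S * ‖u 0‖ + K * M := by gcongr
    _ < ε := by linarith

theorem stmt12_general
    {H : Type*} [NormedAddCommGroup H] [InnerProductSpace ℂ H]
    (B U V : ℝ → H →L[ℂ] H)
    (hV0 : V 0 = 1)
    (hUV : ∀ t, 0 ≤ t → (U t).comp (V t) = 1)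
    (hVd : ∀ t, 0 ≤ t → HasDerivAt V (-((V t).comp (B t))) t)
    (p : ℝ) (hp : 1 < p)
    (α β : ℝ → ℝ) (hαc : Continuous α)
    (hα0 : ∀ t, 0 ≤ α t)
    (T : ℝ≥0∞)
    (u w G f : ℝ → H) (u₀ : H) (hu0 : u 0 = u₀)
    (hud : ∀ t, 0 ≤ t → ENNReal.ofReal t < T →
      HasDerivAt u (B t (u t) + w t + G t + f t) t)
    (hw : ∀ t, 0 ≤ t → ENNReal.ofReal t < T →
      (inner ℂ (V t (w t)) (V t (u t)) : ℂ).re ≤ 0)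
    (hGb : ∀ t, 0 ≤ t → ENNReal.ofReal t < T → ‖G t‖ ≤ α t * ‖u t‖ ^ p)
    (hfb : ∀ t, 0 ≤ t → ENNReal.ofReal t < T → ‖f t‖ ≤ β t)
    (hVud : ∀ t, 0 ≤ t → ENNReal.ofReal t < T →
      DifferentiableAt ℝ (fun s => ‖V s (u s)‖) t)
    (S M ε : ℝ)
    (hS : ∀ t, 0 ≤ t → ‖U t‖ ≤ S)
    (hM : ∀ t, 0 ≤ t → ‖U t‖ * ∫ ξ in (0:ℝ)..t, ‖V ξ‖ * α ξ ≤ M)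
    (hM0 : 0 < M)
    (hε : 0 < ε) (hεM : ε ^ (p - 1) * M < 1 / 4)
    (hu₀S : ‖u₀‖ * S < ε / 4)
    (hβε : ∀ t, 0 ≤ t → β t ≤ ε * α t / (4 * M)) :
    ∀ t, 0 ≤ t → ENNReal.ofReal t < T → ‖u t‖ ≤ ε := by
  intro t ht htT
  have hrestrict : ∀ P : ℝ → Prop, (∀ s, 0 ≤ s → ENNReal.ofReal s < T → P s) →
      ∀ s ∈ Icc 0 t, P s :=
    fun P hP s hs => hP s hs.1 ((ENNReal.ofReal_le_ofReal hs.2).trans_lt htT)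
  have hcont : ContinuousOn (fun s => ‖u s‖) (Icc 0 t) := fun s hs =>
    (hrestrict _ hud s hs).continuousAt.norm.continuousWithinAt
  refine (forall_lt_of_forall_Ico_lt_imp_lt hcont (fun c hc hprior => ?_) t ⟨ht, le_rfl⟩).le
  have hsub : Icc 0 c ⊆ Icc 0 t := Icc_subset_Icc_right hc.2
  exact norm_lt_of_forall_Ico_norm_lt hc.1 hV0 (hUV c hc.1) (fun s hs => hVd s hs.1)
    (fun s hs => hrestrict _ hud s (hsub hs)) (fun s hs => hrestrict _ hw s (hsub hs))
    (fun s hs => hrestrict _ hGb s (hsub hs)) (fun s hs => hrestrict _ hfb s (hsub hs))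
    (fun s hs => hrestrict _ hVud s (hsub hs)) hαc hα0 (by linarith) (hS c hc.1) (hM c hc.1) hM0
    hε hεM (hu0 ▸ hu₀S) (fun s hs => hβε s hs.1) hprior

theorem stmt12
    {H : Type*} [NormedAddCommGroup H] [InnerProductSpace ℂ H] [CompleteSpace H]
    (B U V : ℝ → H →L[ℂ] H)
    (hB : Continuous B)
    (hU0 : U 0 = 1) (hV0 : V 0 = 1)
    (hVU : ∀ t, 0 ≤ t → (V t).comp (U t) = 1)
    (hUV : ∀ t, 0 ≤ t → (U t).comp (V t) = 1)
    (hUd : ∀ t, 0 ≤ t → HasDerivAt U ((B t).comp (U t)) t)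
    (hVd : ∀ t, 0 ≤ t → HasDerivAt V (-((V t).comp (B t))) t)
    (p : ℝ) (hp : 1 < p)
    (α β : ℝ → ℝ) (hαc : Continuous α) (hβc : Continuous β)
    (hα0 : ∀ t, 0 ≤ α t) (hβ0 : ∀ t, 0 ≤ β t)
    (T : ℝ≥0∞) (hT : 0 < T)
    (u w G f : ℝ → H) (u₀ : H) (hu0 : u 0 = u₀)
    (hwc : ContinuousOn w {t : ℝ | 0 ≤ t ∧ ENNReal.ofReal t < T})
    (hGc : ContinuousOn G {t : ℝ | 0 ≤ t ∧ ENNReal.ofReal t < T})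
    (hfc : ContinuousOn f {t : ℝ | 0 ≤ t ∧ ENNReal.ofReal t < T})
    (hud : ∀ t, 0 ≤ t → ENNReal.ofReal t < T →
      HasDerivAt u (B t (u t) + w t + G t + f t) t)
    (hw : ∀ t, 0 ≤ t → ENNReal.ofReal t < T →
      (inner ℂ (V t (w t)) (V t (u t)) : ℂ).re ≤ 0)
    (hGb : ∀ t, 0 ≤ t → ENNReal.ofReal t < T → ‖G t‖ ≤ α t * ‖u t‖ ^ p)
    (hfb : ∀ t, 0 ≤ t → ENNReal.ofReal t < T → ‖f t‖ ≤ β t)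
    (hVud : ∀ t, 0 ≤ t → ENNReal.ofReal t < T →
      DifferentiableAt ℝ (fun s => ‖V s (u s)‖) t)
    (S M ε : ℝ)
    (hS : ∀ t, 0 ≤ t → ‖U t‖ ≤ S)
    (hM : ∀ t, 0 ≤ t → ‖U t‖ * ∫ ξ in (0:ℝ)..t, ‖V ξ‖ * α ξ ≤ M)
    (hM0 : 0 < M)
    (hε : 0 < ε) (hεM : ε ^ (p - 1) * M < 1 / 4)
    (hu₀S : ‖u₀‖ * S < ε / 4) (hu₀ε : ‖u₀‖ < ε)
    (hβε : ∀ t, 0 ≤ t → β t ≤ ε * α t / (4 * M)) :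
    ∀ t, 0 ≤ t → ENNReal.ofReal t < T → ‖u t‖ ≤ ε :=
  stmt12_general B U V hV0 hUV hVd p hp α β hαc hα0 T u w G f u₀ hu0 hud hw hGb hfb hVud S M ε hS hM
    hM0 hε hεM hu₀S hβε
end

section
/- (A priori estimate of Theorem 3.3.) Under the Hilbert propagator setup and the Hilbert solution setup, assume additionally: there is ω ≥ 0 with β(t) ≤ α(t)·ω^p·‖U(t)‖^p for all t ≥ 0; ‖u₀‖ + ω > 0; J := ∫₀^∞ α(ξ)·‖V(ξ)‖·‖U(ξ)‖^p dξ < ∞; and (‖u₀‖ + ω)^{1−p} > (p−1)·J. Set M₃ := 1/((‖u₀‖ + ω)^{1−p} − (p−1)·J). Then for all t ∈ [0,T): ‖u(t)‖ ≤ ‖U(t)‖·(M₃^{1/(p−1)} − ω). In particular, if T = ∞ and ‖U(t)‖ → 0 as t → ∞, then u(t) → 0 as t → ∞. -/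
/-!
Write `φ(t) = ‖V(t) u(t)‖`. In the derivative of `V u` the two `B`-terms cancel, leaving
`V (w + G + f)`; the dissipative part `w` does not increase `φ`, so with `u = U V u` and the bound
on `β` one gets the Bernoulli-type inequality `(φ + ω)' ≤ α ‖V‖ ‖U‖^p (φ + ω)^p`. The substitution
`χ = (φ + ω)^(1-p)` makes it linear, `χ' ≥ (1 - p) α ‖V‖ ‖U‖^p`, and integrating from `0` gives
`(φ + ω)^(1-p) ≥ (‖u₀‖ + ω)^(1-p) - (p - 1) J > 0`, i.e. `φ + ω ≤ M₃^(1/(p-1))`.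
Finally `‖u‖ ≤ ‖U‖ φ`.
-/

open MeasureTheory Filter Set
open scoped ENNReal Topology

section Bernoulli

variable {ψ ψ' g : ℝ → ℝ} {p a b J : ℝ}

lemma rpow_one_sub_sub_integral_le (hp : 1 ≤ p) (hab : a ≤ b) (hψ : ∀ s ∈ Icc a b, 0 < ψ s)
    (hψ' : ∀ s ∈ Icc a b, HasDerivAt ψ (ψ' s) s) (hle : ∀ s ∈ Ioo a b, ψ' s ≤ g s * ψ s ^ p)
    (hg : IntegrableOn g (Icc a b)) :
    ψ a ^ (1 - p) - (p - 1) * ∫ s in a..b, g s ≤ ψ b ^ (1 - p) := by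
  have hχ : ∀ s ∈ Icc a b,
      HasDerivAt (fun r => -ψ r ^ (1 - p)) (-(ψ' s * (1 - p) * ψ s ^ (1 - p - 1))) s :=
    fun s hs => ((hψ' s hs).rpow_const (Or.inl (hψ s hs).ne')).neg
  have hχ_le : ∀ s ∈ Ioo a b, -(ψ' s * (1 - p) * ψ s ^ (1 - p - 1)) ≤ (p - 1) * g s := by
    intro s hs
    have hψs := hψ s (Ioo_subset_Icc_self hs)
    have hcancel : ψ s ^ (1 - p - 1) * ψ s ^ p = 1 := by
      rw [← Real.rpow_add hψs]; norm_num
    have := mul_le_mul_of_nonneg_left (hle s hs) (Real.rpow_nonneg hψs.le (1 - p - 1))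
    have := mul_le_mul_of_nonneg_left this (sub_nonneg.2 hp)
    linear_combination this + (p - 1) * g s * hcancel
  have := intervalIntegral.sub_le_integral_of_hasDeriv_right_of_le hab
    (fun s hs => (hχ s hs).continuousAt.continuousWithinAt)
    (fun s hs => (hχ s (Ioo_subset_Icc_self hs)).hasDerivWithinAt) (hg.const_mul (p - 1)) hχ_le
  rw [intervalIntegral.integral_const_mul] at this
  linarith

lemma rpow_one_sub_sub_integral_le_of_nonneg (hp : 1 ≤ p) (hab : a ≤ b)
    (hψ : ∀ s ∈ Icc a b, 0 ≤ ψ s) (hψ' : ∀ s ∈ Icc a b, HasDerivAt ψ (ψ' s) s)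
    (hle : ∀ s ∈ Ioo a b, ψ' s ≤ g s * ψ s ^ p) (hg₀ : ∀ s ∈ Ioo a b, 0 ≤ g s)
    (hg : IntegrableOn g (Icc a b)) (ha : 0 < ψ a) (hb : 0 < ψ b) :
    ψ a ^ (1 - p) - (p - 1) * ∫ s in a..b, g s ≤ ψ b ^ (1 - p) := by
  -- `ψ` may vanish inside `[a, b]`, where `ψ ^ (1 - p)` is not differentiable: shift it by `ε`.
  have hshift : ∀ ε > 0,
      (ψ a + ε) ^ (1 - p) - (p - 1) * ∫ s in a..b, g s ≤ (ψ b + ε) ^ (1 - p) := by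
    intro ε hε
    refine rpow_one_sub_sub_integral_le (ψ := fun s => ψ s + ε) hp hab
      (fun s hs => by linarith [hψ s hs]) (fun s hs => (hψ' s hs).add_const ε) (fun s hs => ?_) hg
    have hs' := Ioo_subset_Icc_self hs
    exact (hle s hs).trans (mul_le_mul_of_nonneg_left
      (Real.rpow_le_rpow (hψ s hs') (by linarith) (by linarith)) (hg₀ s hs))
  have hlim : ∀ c : ℝ, c ≠ 0 → Tendsto (fun ε => (c + ε) ^ (1 - p)) (𝓝[>] 0) (𝓝 (c ^ (1 - p))) :=
    fun c hc => by
      have hadd : Tendsto (fun ε : ℝ => c + ε) (𝓝[>] 0) (𝓝 c) := by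
        simpa using ((continuous_const_add c).tendsto 0).mono_left nhdsWithin_le_nhds
      exact hadd.rpow_const (Or.inl hc)
  exact le_of_tendsto_of_tendsto ((hlim _ ha.ne').sub_const _) (hlim _ hb.ne')
    (eventually_nhdsWithin_of_forall hshift)

lemma le_one_div_rpow_of_le_rpow_one_sub {x D : ℝ} (hp : 1 < p) (hx : 0 < x) (hD : 0 < D)
    (h : D ≤ x ^ (1 - p)) : x ≤ (1 / D) ^ (1 / (p - 1)) := by
  have hxp : x ^ (p - 1) ≤ 1 / D := by
    rw [show 1 - p = -(p - 1) by ring, Real.rpow_neg hx.le] at h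
    exact (le_one_div (by positivity) hD).2 (by simpa [one_div] using h)
  calc x = (x ^ (p - 1)) ^ (1 / (p - 1)) := by
        rw [one_div, Real.rpow_rpow_inv hx.le (by linarith)]
    _ ≤ (1 / D) ^ (1 / (p - 1)) :=
        Real.rpow_le_rpow (by positivity) hxp (one_div_nonneg.2 (by linarith))

lemma le_of_hasDerivAt_le_mul_rpow (hp : 1 < p) (hab : a ≤ b)
    (hψ : ∀ s ∈ Icc a b, 0 ≤ ψ s) (hψ' : ∀ s ∈ Icc a b, HasDerivAt ψ (ψ' s) s)
    (hle : ∀ s ∈ Ioo a b, ψ' s ≤ g s * ψ s ^ p) (hg₀ : ∀ s ∈ Ioo a b, 0 ≤ g s)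
    (hg : IntegrableOn g (Icc a b)) (hgJ : ∫ s in a..b, g s ≤ J) (ha : 0 < ψ a)
    (hsmall : (p - 1) * J < ψ a ^ (1 - p)) :
    ψ b ≤ (1 / (ψ a ^ (1 - p) - (p - 1) * J)) ^ (1 / (p - 1)) := by
  obtain hb | hb := (hψ b (right_mem_Icc.2 hab)).eq_or_lt
  · rw [← hb]; positivity
  refine le_one_div_rpow_of_le_rpow_one_sub hp hb (by linarith) ?_
  have := rpow_one_sub_sub_integral_le_of_nonneg hp.le hab hψ hψ' hle hg₀ hg ha hb
  nlinarith

end Bernoulli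

lemma intervalIntegral_le_integral_Ioi {g : ℝ → ℝ} {a b : ℝ} (hab : a ≤ b)
    (hg : IntegrableOn g (Ioi a)) (hg₀ : ∀ s ∈ Ioi a, 0 ≤ g s) :
    ∫ s in a..b, g s ≤ ∫ s in Ioi a, g s := by
  rw [intervalIntegral.integral_of_le hab]
  exact setIntegral_mono_set hg (ae_restrict_of_forall_mem measurableSet_Ioi hg₀)
    Ioc_subset_Ioi_self.eventuallyLE

lemma hasDerivAt_clm_apply_of_hasDerivAt_neg_comp {E F : Type*} [NormedAddCommGroup E]
    [NormedSpace ℂ E] [NormedAddCommGroup F] [NormedSpace ℂ F] {V : ℝ → E →L[ℂ] F}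
    {B : E →L[ℂ] E} {u : ℝ → E} {r : E} {t : ℝ} (hV : HasDerivAt V (-((V t).comp B)) t)
    (hu : HasDerivAt u (B (u t) + r) t) : HasDerivAt (fun s => V s (u s)) (V t r) t := by
  have hVℝ : HasDerivAt (fun s => (V s).restrictScalars ℝ)
      ((-((V t).comp B)).restrictScalars ℝ) t :=
    (ContinuousLinearMap.restrictScalarsIsometry ℂ E F ℝ ℝ).toContinuousLinearMap.hasFDerivAt
      |>.comp_hasDerivAt t hV
  refine (hVℝ.clm_apply hu).congr_deriv ?_
  change -V t (B (u t)) + V t (B (u t) + r) = V t r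
  rw [map_add, neg_add_cancel_left]

lemma le_norm_of_hasDerivAt_norm {F : Type*} [NormedAddCommGroup F] [InnerProductSpace ℝ F]
    {v : ℝ → F} {a b : F} {d t : ℝ} (hv : HasDerivAt v (a + b) t)
    (hd : HasDerivAt (‖v ·‖) d t) (ha : inner ℝ a (v t) ≤ 0) : d ≤ ‖b‖ := by
  obtain hvt | hvt := eq_or_ne (v t) 0
  · have hmin : IsLocalMin (‖v ·‖) t :=
      Eventually.of_forall fun s => by simp [hvt]
    exact (hmin.hasDerivAt_eq_zero hd).trans_le (norm_nonneg b)
  have hsq : 2 * ‖v t‖ * d = 2 * inner ℝ (v t) (a + b) := by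
    simpa using (hd.pow 2).unique hv.norm_sq
  have hb : inner ℝ b (v t) ≤ ‖b‖ * ‖v t‖ := real_inner_le_norm b (v t)
  rw [inner_add_right, real_inner_comm a, real_inner_comm b] at hsq
  have : ‖v t‖ * d ≤ ‖v t‖ * ‖b‖ := by nlinarith
  exact le_of_mul_le_mul_left this (norm_pos_iff.2 hvt)

lemma norm_le_mul_norm_apply_of_comp_eq_one {𝕜 E F : Type*} [NontriviallyNormedField 𝕜]
    [NormedAddCommGroup E] [NormedSpace 𝕜 E] [NormedAddCommGroup F] [NormedSpace 𝕜 F]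
    {U : F →L[𝕜] E} {V : E →L[𝕜] F} (hUV : U.comp V = 1) (x : E) : ‖x‖ ≤ ‖U‖ * ‖V x‖ :=
  calc ‖x‖ = ‖U (V x)‖ := by rw [← ContinuousLinearMap.comp_apply, hUV, one_apply_eq_self]
    _ ≤ ‖U‖ * ‖V x‖ := U.le_opNorm (V x)

lemma norm_apply_add_le {𝕜 E F : Type*} [NontriviallyNormedField 𝕜] [NormedAddCommGroup E]
    [NormedSpace 𝕜 E] [NormedAddCommGroup F] [NormedSpace 𝕜 F] {U : F →L[𝕜] E}
    {V : E →L[𝕜] F} {u x y : E} {α ω p : ℝ} (hp : 1 ≤ p) (hα : 0 ≤ α) (hω : 0 ≤ ω)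
    (hUV : U.comp V = 1) (hx : ‖x‖ ≤ α * ‖u‖ ^ p) (hy : ‖y‖ ≤ α * ω ^ p * ‖U‖ ^ p) :
    ‖V (x + y)‖ ≤ α * ‖V‖ * ‖U‖ ^ p * (‖V u‖ + ω) ^ p := by
  have hu_le : ‖u‖ ^ p ≤ ‖U‖ ^ p * ‖V u‖ ^ p := by
    rw [← Real.mul_rpow (norm_nonneg _) (norm_nonneg _)]
    exact Real.rpow_le_rpow (norm_nonneg _) (norm_le_mul_norm_apply_of_comp_eq_one hUV u)
      (by linarith)
  calc ‖V (x + y)‖ ≤ ‖V‖ * (‖x‖ + ‖y‖) :=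
        (V.le_opNorm _).trans (mul_le_mul_of_nonneg_left (norm_add_le x y) (norm_nonneg V))
    _ ≤ ‖V‖ * (α * ‖U‖ ^ p * (‖V u‖ ^ p + ω ^ p)) := by
        gcongr
        nlinarith [mul_le_mul_of_nonneg_left hu_le hα]
    _ = α * ‖V‖ * ‖U‖ ^ p * (‖V u‖ ^ p + ω ^ p) := by ring
    _ ≤ α * ‖V‖ * ‖U‖ ^ p * (‖V u‖ + ω) ^ p := by
        gcongr
        exact Real.add_rpow_le_rpow_add (norm_nonneg _) hω hp

lemma deriv_norm_apply_le {H : Type*} [NormedAddCommGroup H] [InnerProductSpace ℂ H]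
    {V : ℝ → H →L[ℂ] H} {B U : H →L[ℂ] H} {u : ℝ → H} {w G f : H} {α ω p t : ℝ}
    (hp : 1 ≤ p) (hα : 0 ≤ α) (hω : 0 ≤ ω) (hV : HasDerivAt V (-((V t).comp B)) t)
    (hu : HasDerivAt u (B (u t) + w + G + f) t)
    (hφ : DifferentiableAt ℝ (fun s => ‖V s (u s)‖) t)
    (hw : (inner ℂ (V t w) (V t (u t))).re ≤ 0) (hUV : U.comp (V t) = 1)
    (hG : ‖G‖ ≤ α * ‖u t‖ ^ p) (hf : ‖f‖ ≤ α * ω ^ p * ‖U‖ ^ p) :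
    deriv (fun s => ‖V s (u s)‖) t ≤ α * ‖V t‖ * ‖U‖ ^ p * (‖V t (u t)‖ + ω) ^ p := by
  let _ : InnerProductSpace ℝ H := InnerProductSpace.complexToReal
  have hv := hasDerivAt_clm_apply_of_hasDerivAt_neg_comp (r := w + (G + f)) hV
    (by simpa only [add_assoc] using hu)
  rw [map_add] at hv
  calc deriv (fun s => ‖V s (u s)‖) t ≤ ‖V t (G + f)‖ :=
        le_norm_of_hasDerivAt_norm hv hφ.hasDerivAt (by rwa [real_inner_eq_re_inner ℂ])
    _ ≤ _ := norm_apply_add_le hp hα hω hUV hG hf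

theorem stmt13_general
    {H : Type*} [NormedAddCommGroup H] [InnerProductSpace ℂ H]
    (B U V : ℝ → H →L[ℂ] H)
    (hV0 : V 0 = 1)
    (hUV : ∀ t, 0 ≤ t → (U t).comp (V t) = 1)
    (hVd : ∀ t, 0 ≤ t → HasDerivAt V (-((V t).comp (B t))) t)
    (p : ℝ) (hp : 1 < p)
    (α β : ℝ → ℝ)
    (hα0 : ∀ t, 0 ≤ α t)
    (T : ℝ≥0∞)
    (u w G f : ℝ → H) (u₀ : H) (hu0 : u 0 = u₀)
    (hud : ∀ t, 0 ≤ t → ENNReal.ofReal t < T →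
      HasDerivAt u (B t (u t) + w t + G t + f t) t)
    (hw : ∀ t, 0 ≤ t → ENNReal.ofReal t < T →
      (inner ℂ (V t (w t)) (V t (u t)) : ℂ).re ≤ 0)
    (hGb : ∀ t, 0 ≤ t → ENNReal.ofReal t < T → ‖G t‖ ≤ α t * ‖u t‖ ^ p)
    (hfb : ∀ t, 0 ≤ t → ENNReal.ofReal t < T → ‖f t‖ ≤ β t)
    (hVud : ∀ t, 0 ≤ t → ENNReal.ofReal t < T →
      DifferentiableAt ℝ (fun s => ‖V s (u s)‖) t)
    (ω : ℝ) (hω : 0 ≤ ω)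
    (hβω : ∀ t, 0 ≤ t → β t ≤ α t * ω ^ p * ‖U t‖ ^ p)
    (hpos : 0 < ‖u₀‖ + ω)
    (hJint : IntegrableOn (fun ξ => α ξ * ‖V ξ‖ * ‖U ξ‖ ^ p) (Set.Ioi (0:ℝ)))
    (J : ℝ) (hJ : J = ∫ ξ in Set.Ioi (0:ℝ), α ξ * ‖V ξ‖ * ‖U ξ‖ ^ p)
    (hsmall : (p - 1) * J < (‖u₀‖ + ω) ^ (1 - p)) :
    (∀ t, 0 ≤ t → ENNReal.ofReal t < T →
      ‖u t‖ ≤ ‖U t‖ * ((1 / ((‖u₀‖ + ω) ^ (1 - p) - (p - 1) * J)) ^ (1 / (p - 1)) - ω)) ∧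
    (T = ⊤ → Tendsto (fun t => ‖U t‖) atTop (nhds 0) → Tendsto u atTop (nhds 0)) := by
  set K := (1 / ((‖u₀‖ + ω) ^ (1 - p) - (p - 1) * J)) ^ (1 / (p - 1))
  set g : ℝ → ℝ := fun ξ => α ξ * ‖V ξ‖ * ‖U ξ‖ ^ p
  have hg₀ : ∀ s, 0 ≤ g s := fun s => by have := hα0 s; positivity
  have hderiv : ∀ s, 0 ≤ s → ENNReal.ofReal s < T →
      deriv (fun r => ‖V r (u r)‖) s ≤ g s * (‖V s (u s)‖ + ω) ^ p := fun s hs hsT =>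
    deriv_norm_apply_le hp.le (hα0 s) hω (hVd s hs) (hud s hs hsT) (hVud s hs hsT)
      (hw s hs hsT) (hUV s hs) (hGb s hs hsT) ((hfb s hs hsT).trans (hβω s hs))
  have hφ_le : ∀ t, 0 ≤ t → ENNReal.ofReal t < T → ‖V t (u t)‖ + ω ≤ K := by
    intro t ht htT
    have hsT : ∀ s ∈ Icc 0 t, ENNReal.ofReal s < T := fun s hs =>
      (ENNReal.ofReal_le_ofReal hs.2).trans_lt htT
    have hφ0 : ‖V 0 (u 0)‖ = ‖u₀‖ := by rw [hV0, hu0, one_apply_eq_self]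
    have := le_of_hasDerivAt_le_mul_rpow (ψ := fun s => ‖V s (u s)‖ + ω) (g := g) hp ht
      (fun s _ => by positivity) (fun s hs => (hVud s hs.1 (hsT s hs)).hasDerivAt.add_const ω)
      (fun s hs => hderiv s hs.1.le (hsT s (Ioo_subset_Icc_self hs))) (fun s _ => hg₀ s)
      ((integrableOn_Icc_iff_integrableOn_Ioc).2 (hJint.mono_set Ioc_subset_Ioi_self))
      ((intervalIntegral_le_integral_Ioi ht hJint fun s _ => hg₀ s).trans hJ.ge)
      (by rwa [hφ0]) (by rwa [hφ0])
    rwa [hφ0] at this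
  have hbound : ∀ t, 0 ≤ t → ENNReal.ofReal t < T → ‖u t‖ ≤ ‖U t‖ * (K - ω) := by
    intro t ht htT
    calc ‖u t‖ ≤ ‖U t‖ * ‖V t (u t)‖ := norm_le_mul_norm_apply_of_comp_eq_one (hUV t ht) _
      _ ≤ ‖U t‖ * (K - ω) := by gcongr; linarith [hφ_le t ht htT]
  refine ⟨hbound, fun hT hU => ?_⟩
  refine squeeze_zero_norm' ?_ (by simpa using hU.mul_const (K - ω))
  filter_upwards [eventually_ge_atTop 0] with t ht
  exact hbound t ht (hT ▸ ENNReal.ofReal_lt_top)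

theorem stmt13
    {H : Type*} [NormedAddCommGroup H] [InnerProductSpace ℂ H] [CompleteSpace H]
    (B U V : ℝ → H →L[ℂ] H)
    (hB : Continuous B)
    (hU0 : U 0 = 1) (hV0 : V 0 = 1)
    (hVU : ∀ t, 0 ≤ t → (V t).comp (U t) = 1)
    (hUV : ∀ t, 0 ≤ t → (U t).comp (V t) = 1)
    (hUd : ∀ t, 0 ≤ t → HasDerivAt U ((B t).comp (U t)) t)
    (hVd : ∀ t, 0 ≤ t → HasDerivAt V (-((V t).comp (B t))) t)
    (p : ℝ) (hp : 1 < p)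
    (α β : ℝ → ℝ) (hαc : Continuous α) (hβc : Continuous β)
    (hα0 : ∀ t, 0 ≤ α t) (hβ0 : ∀ t, 0 ≤ β t)
    (T : ℝ≥0∞) (hT : 0 < T)
    (u w G f : ℝ → H) (u₀ : H) (hu0 : u 0 = u₀)
    (hwc : ContinuousOn w {t : ℝ | 0 ≤ t ∧ ENNReal.ofReal t < T})
    (hGc : ContinuousOn G {t : ℝ | 0 ≤ t ∧ ENNReal.ofReal t < T})
    (hfc : ContinuousOn f {t : ℝ | 0 ≤ t ∧ ENNReal.ofReal t < T})
    (hud : ∀ t, 0 ≤ t → ENNReal.ofReal t < T →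
      HasDerivAt u (B t (u t) + w t + G t + f t) t)
    (hw : ∀ t, 0 ≤ t → ENNReal.ofReal t < T →
      (inner ℂ (V t (w t)) (V t (u t)) : ℂ).re ≤ 0)
    (hGb : ∀ t, 0 ≤ t → ENNReal.ofReal t < T → ‖G t‖ ≤ α t * ‖u t‖ ^ p)
    (hfb : ∀ t, 0 ≤ t → ENNReal.ofReal t < T → ‖f t‖ ≤ β t)
    (hVud : ∀ t, 0 ≤ t → ENNReal.ofReal t < T →
      DifferentiableAt ℝ (fun s => ‖V s (u s)‖) t)
    (ω : ℝ) (hω : 0 ≤ ω)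
    (hβω : ∀ t, 0 ≤ t → β t ≤ α t * ω ^ p * ‖U t‖ ^ p)
    (hpos : 0 < ‖u₀‖ + ω)
    (hJint : IntegrableOn (fun ξ => α ξ * ‖V ξ‖ * ‖U ξ‖ ^ p) (Set.Ioi (0:ℝ)))
    (J : ℝ) (hJ : J = ∫ ξ in Set.Ioi (0:ℝ), α ξ * ‖V ξ‖ * ‖U ξ‖ ^ p)
    (hsmall : (p - 1) * J < (‖u₀‖ + ω) ^ (1 - p)) :
    (∀ t, 0 ≤ t → ENNReal.ofReal t < T →
      ‖u t‖ ≤ ‖U t‖ * ((1 / ((‖u₀‖ + ω) ^ (1 - p) - (p - 1) * J)) ^ (1 / (p - 1)) - ω)) ∧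
    (T = ⊤ → Tendsto (fun t => ‖U t‖) atTop (nhds 0) → Tendsto u atTop (nhds 0)) :=
  stmt13_general B U V hV0 hUV hVd p hp α β hα0 T u w G f u₀ hu0 hud hw hGb hfb hVud ω hω hβω hpos
    hJint J hJ hsmall
end
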